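/- For s, s' ≥ 1, the polynomial p⁻_s divides p⁻_{s'} (over ℤ) if and only if 2s+1 divides 2s'+1, where p⁻_n = c_n - c_{n-1}. -/

import Mathlib

/-!
Writing `p⁻_n = S_n - S_{n-1}` with `S` the rescaled Chebyshev polynomials of the second kind makes
sense for every integer `n`, and the product formula `C_j S_n = S_{n+j} + S_{n-j}` gives
`C_j p⁻_n = p⁻_{n+j} + p⁻_{n-j}`. So whether `p⁻_s ∣ p⁻_n` is invariant under the reflection
`n ↦ 2s - n`; it is also invariant under `n ↦ -n - 1`, since `p⁻_{-n-1} = p⁻_n`. Composing the two,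
it depends only on `n mod 2s+1`. A residue `r > s` reflects to `2s - r < s`, and the monic `p⁻_s`
of degree `s` divides no nonzero polynomial of smaller degree, so only `r = s` survives, which is
exactly `2s+1 ∣ 2n+1`.
-/

open Polynomial

/-- `c n` is the paper's `c_{n-1}`, so `p⁻_n = c (n+1) - c n`. -/
noncomputable def c : ℕ → Polynomial ℤ
  | 0 => 0
  | 1 => 1
  | (n + 2) => X * c (n + 1) - c n

theorem two_mul_add_one_dvd_iff_mod (s n : ℕ) : 2 * s + 1 ∣ 2 * n + 1 ↔ n % (2 * s + 1) = s := by
  set m := 2 * s + 1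
  have hr : n % m < m := Nat.mod_lt _ (by omega)
  have hreduce : m ∣ 2 * n + 1 ↔ m ∣ 2 * (n % m) + 1 := by
    conv_lhs => rw [← Nat.mod_add_div n m]
    rw [show 2 * (n % m + m * (n / m)) + 1 = 2 * (n % m) + 1 + m * (2 * (n / m)) by ring,
      Nat.dvd_add_left (dvd_mul_right m _)]
  rw [hreduce]
  refine ⟨fun h ↦ ?_, fun h ↦ by rw [h]⟩
  have := Nat.eq_of_dvd_of_lt_two_mul (by omega) h (by omega)
  omega

namespace Polynomial.Chebyshev

variable (R : Type*) [CommRing R]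

/-- `p⁻_n(x) = V_n(x/2)`, the rescaled Chebyshev polynomial of the third kind, for all `n : ℤ`. -/
noncomputable def pMinus (n : ℤ) : R[X] := S R n - S R (n - 1)

theorem C_mul_S (j n : ℤ) : C R j * S R n = S R (n + j) + S R (n - j) := by
  induction j using Polynomial.Chebyshev.induct with
  | zero => simp [C_zero, two_mul]
  | one => rw [C_one, S_add_one]; ring
  | add_two j ih1 ih2 =>
    have h₁ := S_add_two R (n + j)
    have h₂ := S_sub_two R (n - j)
    have h₃ := C_add_two R j
    linear_combination (norm := ring_nf) S R n * h₃ - h₂ - h₁ - ih2 + (X : R[X]) * ih1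
  | neg_add_one j ih1 ih2 =>
    have h₁ := S_add_two R (n + (-j - 1))
    have h₂ := S_sub_two R (n - (-j - 1))
    have h₃ := C_add_two R (-j - 1)
    linear_combination (norm := ring_nf) S R n * h₃ - h₂ - h₁ - ih2 + (X : R[X]) * ih1

theorem C_mul_pMinus (j n : ℤ) :
    C R j * pMinus R n = pMinus R (n + j) + pMinus R (n - j) := by
  have h₁ := C_mul_S R j n
  have h₂ := C_mul_S R j (n - 1)
  simp only [pMinus]
  linear_combination (norm := ring_nf) h₁ - h₂

theorem pMinus_neg_sub_one (n : ℤ) : pMinus R (-n - 1) = pMinus R n := by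
  rw [pMinus, sub_sub, one_add_one_eq_two, S_neg_sub_one, S_neg_sub_two, pMinus]
  ring

theorem S_monic_and_natDegree [Nontrivial R] (n : ℕ) :
    (S R n).Monic ∧ (S R n).natDegree = n := by
  induction n using Nat.twoStepInduction with
  | zero => simp
  | one => simp
  | more n ih₀ ih₁ =>
    push_cast at ih₁
    have hXS : (X * S R (n + 1)).Monic ∧ (X * S R (n + 1)).natDegree = n + 2 := by
      refine ⟨monic_X.mul ih₁.1, ?_⟩
      rw [monic_X.natDegree_mul ih₁.1, natDegree_X, ih₁.2]
      ring
    have hlt : (S R n).natDegree < (X * S R (n + 1)).natDegree := by omega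
    push_cast
    rw [S_add_two]
    exact ⟨hXS.1.sub_of_left (degree_lt_degree hlt),
      by rw [natDegree_sub_eq_left_of_natDegree_lt hlt, hXS.2]⟩

theorem pMinus_monic_and_natDegree [Nontrivial R] (n : ℕ) :
    (pMinus R n).Monic ∧ (pMinus R n).natDegree = n := by
  cases n with
  | zero => simp [pMinus]
  | succ k =>
    have hS₁ := S_monic_and_natDegree R (k + 1)
    have hS₀ := S_monic_and_natDegree R k
    have hlt : (S R k).natDegree < (S R (k + 1 : ℕ)).natDegree := by omega
    rw [pMinus, Nat.cast_succ, add_sub_cancel_right, ← Nat.cast_succ]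
    exact ⟨hS₁.1.sub_of_left (degree_lt_degree hlt),
      by rw [natDegree_sub_eq_left_of_natDegree_lt hlt, hS₁.2]⟩

theorem not_pMinus_dvd_pMinus_of_lt [Nontrivial R] {r s : ℕ} (h : r < s) :
    ¬ pMinus R s ∣ pMinus R r := by
  obtain ⟨hr, hr'⟩ := pMinus_monic_and_natDegree R r
  obtain ⟨hs, hs'⟩ := pMinus_monic_and_natDegree R s
  exact hs.not_dvd_of_natDegree_lt hr.ne_zero (by omega)

theorem pMinus_dvd_pMinus_add_iff_sub (s j : ℤ) :
    pMinus R s ∣ pMinus R (s + j) ↔ pMinus R s ∣ pMinus R (s - j) := by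
  have hsum : pMinus R s ∣ pMinus R (s + j) + pMinus R (s - j) :=
    ⟨C R j, by rw [← C_mul_pMinus, mul_comm]⟩
  exact ⟨fun h ↦ by simpa using dvd_sub hsum h, fun h ↦ by simpa using dvd_sub hsum h⟩

theorem pMinus_dvd_pMinus_add_iff (s n : ℤ) :
    pMinus R s ∣ pMinus R (n + (2 * s + 1)) ↔ pMinus R s ∣ pMinus R n := by
  rw [show n + (2 * s + 1) = s + (n + s + 1) by ring, pMinus_dvd_pMinus_add_iff_sub,
    show s - (n + s + 1) = -n - 1 by ring, pMinus_neg_sub_one]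

theorem pMinus_dvd_pMinus_iff_of_lt [Nontrivial R] {s r : ℕ} (hr : r < 2 * s + 1) :
    pMinus R s ∣ pMinus R r ↔ r = s := by
  rcases lt_trichotomy r s with hrs | rfl | hsr
  · exact iff_of_false (not_pMinus_dvd_pMinus_of_lt R hrs) hrs.ne
  · simp
  · have hreflect := pMinus_dvd_pMinus_add_iff_sub R s (r - s)
    rw [add_sub_cancel, show (s : ℤ) - (r - s) = (2 * s - r : ℕ) by omega] at hreflect
    rw [hreflect]
    exact iff_of_false (not_pMinus_dvd_pMinus_of_lt R (by omega)) hsr.ne'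

theorem pMinus_dvd_pMinus_iff_mod [Nontrivial R] (s n : ℕ) :
    pMinus R s ∣ pMinus R n ↔ n % (2 * s + 1) = s := by
  have hperiodic : Function.Periodic (fun n : ℕ ↦ pMinus R s ∣ pMinus R n) (2 * s + 1) :=
    fun n ↦ by simpa using pMinus_dvd_pMinus_add_iff R s n
  rw [← hperiodic.map_mod_nat n]
  exact pMinus_dvd_pMinus_iff_of_lt R (Nat.mod_lt _ (by omega))

theorem pMinus_dvd_pMinus_iff [Nontrivial R] (s n : ℕ) :
    pMinus R s ∣ pMinus R n ↔ 2 * s + 1 ∣ 2 * n + 1 := by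
  rw [pMinus_dvd_pMinus_iff_mod, two_mul_add_one_dvd_iff_mod]

end Polynomial.Chebyshev

theorem c_eq_S (n : ℕ) : c n = Chebyshev.S ℤ (n - 1) := by
  induction n using Nat.twoStepInduction with
  | zero => simp [c]
  | one => simp [c]
  | more n ih₀ ih₁ =>
    rw [c, ih₀, ih₁]
    push_cast
    linear_combination (norm := ring_nf) -(Chebyshev.S_add_one ℤ n)

theorem c_succ_sub_c (n : ℕ) : c (n + 1) - c n = Chebyshev.pMinus ℤ n := by
  rw [c_eq_S, c_eq_S, Chebyshev.pMinus, Nat.cast_succ, add_sub_cancel_right]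

theorem stmt_15_general (s s' : ℕ) :
    (c (s + 1) - c s) ∣ (c (s' + 1) - c s') ↔ (2 * s + 1) ∣ (2 * s' + 1) := by
  rw [c_succ_sub_c, c_succ_sub_c, Chebyshev.pMinus_dvd_pMinus_iff]

theorem stmt_15 (s s' : ℕ) (hs : 1 ≤ s) (hs' : 1 ≤ s') :
    (c (s + 1) - c s) ∣ (c (s' + 1) - c s') ↔ (2 * s + 1) ∣ (2 * s' + 1) :=
  stmt_15_general s s'
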